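/- Let Γ be a distance-regular digraph with girth g ≥ 3 and λ ≠ 0 (i.e., a_{11}^1 = λ > 0). Then for every l with 2 ≤ l ≤ D (D the diameter), there exist vertices u, v with ∂(u,v) = l that have a common out-neighbor; equivalently, a_{11}^l ≥ 1. -/
import Mathlib


open Set

namespace PaperDRD

variable {V : Type*}

def HasWalk (E : V → V → Prop) (u v : V) (n : ℕ) : Prop :=
  ∃ f : Fin (n + 1) → V, f 0 = u ∧ f (Fin.last n) = v ∧
    ∀ i : Fin n, E (f i.castSucc) (f i.succ)

def StronglyConnected (E : V → V → Prop) : Prop :=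
  ∀ u v : V, ∃ n : ℕ, HasWalk E u v n

noncomputable def ddist (E : V → V → Prop) (u v : V) : ℕ :=
  sInf {n : ℕ | HasWalk E u v n}

noncomputable def girth (E : V → V → Prop) : ℕ :=
  sInf {n : ℕ | 0 < n ∧ ∃ u : V, HasWalk E u u n}

noncomputable def diam [Fintype V] (E : V → V → Prop) : ℕ :=
  Finset.univ.sup fun p : V × V => ddist E p.1 p.2

noncomputable def outDeg (E : V → V → Prop) (x : V) : ℕ := {y : V | E x y}.ncard

noncomputable def inDeg (E : V → V → Prop) (x : V) : ℕ := {y : V | E y x}.ncard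

def IsRegular (E : V → V → Prop) (k : ℕ) : Prop :=
  ∀ x : V, outDeg E x = k ∧ inDeg E x = k

def DelEdges (E : V → V → Prop) (F : Set (V × V)) : V → V → Prop :=
  fun a b => E a b ∧ (a, b) ∉ F

def IsEdgeCut (E : V → V → Prop) (F : Set (V × V)) : Prop :=
  (∀ e ∈ F, E e.1 e.2) ∧ ¬ StronglyConnected (DelEdges E F)

noncomputable def edgeConnectivity (E : V → V → Prop) : ℕ :=
  sInf {n : ℕ | ∃ F : Set (V × V), IsEdgeCut E F ∧ F.ncard = n}

def IsMinEdgeCut (E : V → V → Prop) (F : Set (V × V)) : Prop :=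
  IsEdgeCut E F ∧ F.ncard = edgeConnectivity E

def outStar (E : V → V → Prop) (x : V) : Set (V × V) := {e : V × V | e.1 = x ∧ E x e.2}

def inStar (E : V → V → Prop) (x : V) : Set (V × V) := {e : V × V | e.2 = x ∧ E e.1 x}

def IsDRDigraph (E : V → V → Prop) (k : ℕ) : Prop :=
  Irreflexive E ∧ IsRegular E k ∧ StronglyConnected E ∧
    ∀ (i m : ℕ) (u v u' v' : V), 1 ≤ m → ddist E u v = m → ddist E u' v' = m →
      {w : V | ddist E u w = i ∧ E v w}.ncard = {w : V | ddist E u' w = i ∧ E v' w}.ncard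

def IsSRDigraph (E : V → V → Prop) (n k t lam mu : ℕ) : Prop :=
  Irreflexive E ∧ Nat.card V = n ∧ IsRegular E k ∧ StronglyConnected E ∧
    (∀ u : V, {w : V | E u w ∧ E w u}.ncard = t) ∧
    (∀ u v : V, u ≠ v → E u v → {w : V | E u w ∧ E w v}.ncard = lam) ∧
    (∀ u v : V, u ≠ v → ¬ E u v → {w : V | E u w ∧ E w v}.ncard = mu)

def IsUndirectedCycleN (E : V → V → Prop) (n : ℕ) : Prop :=
  ∃ e : V ≃ ZMod n, ∀ a b : V, E a b ↔ (e b = e a + 1 ∨ e a = e b + 1)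

def IsUndirectedCycle (E : V → V → Prop) : Prop :=
  ∃ n : ℕ, 3 ≤ n ∧ IsUndirectedCycleN E n

section WalkBasics

variable {E : V → V → Prop} {u v w : V} {m n : ℕ}

lemma hasWalk_zero : HasWalk E u v 0 ↔ u = v := by
  constructor
  · rintro ⟨f, h0, hl, _⟩
    rw [← h0, ← hl]; rfl
  · rintro rfl
    exact ⟨fun _ => u, rfl, rfl, fun i => i.elim0⟩

lemma hasWalk_succ_iff : HasWalk E u v (n + 1) ↔ ∃ w, E u w ∧ HasWalk E w v n := by
  constructor
  · rintro ⟨f, h0, hl, he⟩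
    refine ⟨f (1 : Fin (n + 2)), ?_, fun i => f i.succ, rfl, ?_, ?_⟩
    · have := he 0
      simpa [h0] using this
    · show f (Fin.last n).succ = v
      rw [Fin.succ_last]
      exact hl
    · intro i
      have := he i.succ
      rwa [← Fin.succ_castSucc] at this
  · rintro ⟨w, hw, f, h0, hl, he⟩
    refine ⟨Fin.cons u f, Fin.cons_zero _ _, ?_, ?_⟩
    · rw [show (Fin.last (n + 1)) = (Fin.last n).succ from (Fin.succ_last n).symm,
        Fin.cons_succ]
      exact hl
    · intro i
      obtain rfl | ⟨j, rfl⟩ := Fin.eq_zero_or_eq_succ i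
      · have h1 : Fin.castSucc (0 : Fin (n+1)) = 0 := rfl
        rw [h1, Fin.cons_zero, Fin.cons_succ, h0]
        exact hw
      · rw [← Fin.succ_castSucc, Fin.cons_succ, Fin.cons_succ]
        exact he j

lemma hasWalk_one : HasWalk E u v 1 ↔ E u v := by
  rw [hasWalk_succ_iff]
  constructor
  · rintro ⟨w, hw, h0⟩; rwa [hasWalk_zero.mp h0] at hw
  · intro h; exact ⟨v, h, hasWalk_zero.mpr rfl⟩

lemma HasWalk.concat : HasWalk E u v m → HasWalk E v w n → HasWalk E u w (m + n) := by
  induction m generalizing u with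
  | zero => intro h1 h2; rwa [hasWalk_zero.mp h1, Nat.zero_add]
  | succ m ih =>
    intro h1 h2
    obtain ⟨x, hx, h1'⟩ := hasWalk_succ_iff.mp h1
    have : HasWalk E x w (m + n) := ih h1' h2
    rw [show m + 1 + n = (m + n) + 1 by omega]
    exact hasWalk_succ_iff.mpr ⟨x, hx, this⟩

lemma HasWalk.split (h : HasWalk E u v (m + n)) :
    ∃ x, HasWalk E u x m ∧ HasWalk E x v n := by
  induction m generalizing u with
  | zero => exact ⟨u, hasWalk_zero.mpr rfl, by simpa using h⟩
  | succ m ih =>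
    rw [show m + 1 + n = (m + n) + 1 by omega, hasWalk_succ_iff] at h
    obtain ⟨x, hx, h'⟩ := h
    obtain ⟨y, hy1, hy2⟩ := ih h'
    exact ⟨y, hasWalk_succ_iff.mpr ⟨x, hx, hy1⟩, hy2⟩

end WalkBasics

section DdistBasics

variable {E : V → V → Prop} {u v w : V} {m n : ℕ}

lemma ddist_nonempty (hsc : StronglyConnected E) (u v : V) :
    {n : ℕ | HasWalk E u v n}.Nonempty := hsc u v

lemma hasWalk_ddist (hsc : StronglyConnected E) (u v : V) :
    HasWalk E u v (ddist E u v) := Nat.sInf_mem (hsc u v)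

lemma ddist_le (h : HasWalk E u v n) : ddist E u v ≤ n := Nat.sInf_le h

lemma ddist_self (u : V) : ddist E u u = 0 :=
  Nat.le_antisymm (ddist_le (hasWalk_zero.mpr rfl)) (Nat.zero_le _)

lemma ddist_eq_zero_iff (hsc : StronglyConnected E) :
    ddist E u v = 0 ↔ u = v := by
  constructor
  · intro h
    have := hasWalk_ddist hsc u v
    rw [h] at this
    exact hasWalk_zero.mp this
  · rintro rfl; exact ddist_self u

lemma ddist_triangle (hsc : StronglyConnected E) (u v w : V) :
    ddist E u w ≤ ddist E u v + ddist E v w :=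
  ddist_le ((hasWalk_ddist hsc u v).concat (hasWalk_ddist hsc v w))

lemma ddist_eq_one_iff (hirr : Irreflexive E) (hsc : StronglyConnected E) :
    ddist E u v = 1 ↔ E u v := by
  constructor
  · intro h
    have := hasWalk_ddist hsc u v
    rw [h] at this
    exact hasWalk_one.mp this
  · intro h
    have h1 : ddist E u v ≤ 1 := ddist_le (hasWalk_one.mpr h)
    have h0 : ddist E u v ≠ 0 := by
      intro h0
      rw [ddist_eq_zero_iff hsc] at h0
      exact hirr u (h0 ▸ h)
    omega

lemma ddist_split (hsc : StronglyConnected E) (h : m ≤ ddist E u v) :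
    ∃ x, ddist E u x = m ∧ ddist E x v = ddist E u v - m := by
  have hw := hasWalk_ddist hsc u v
  rw [show ddist E u v = m + (ddist E u v - m) by omega] at hw
  obtain ⟨x, h1, h2⟩ := hw.split
  have l1 : ddist E u x ≤ m := ddist_le h1
  have l2 : ddist E x v ≤ ddist E u v - m := ddist_le h2
  have l3 : ddist E u v ≤ ddist E u x + ddist E x v := ddist_triangle hsc u x v
  exact ⟨x, by omega, by omega⟩

lemma ddist_le_diam [Fintype V] (E : V → V → Prop) (u v : V) :
    ddist E u v ≤ diam E :=
  Finset.le_sup (f := fun p : V × V => ddist E p.1 p.2) (Finset.mem_univ (u, v))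

lemma exists_pair_ddist_eq [Fintype V] (hsc : StronglyConnected E) (hne : Nonempty V)
    (hl : n ≤ diam E) : ∃ u v : V, ddist E u v = n := by
  have hx : (Finset.univ : Finset (V × V)).Nonempty := Finset.univ_nonempty
  obtain ⟨p, _, hp⟩ := Finset.exists_mem_eq_sup Finset.univ hx
    (fun p : V × V => ddist E p.1 p.2)
  have : n ≤ ddist E p.1 p.2 := by rw [← hp]; exact hl
  obtain ⟨x, hx1, _⟩ := ddist_split hsc this
  exact ⟨p.1, x, hx1⟩

end DdistBasics

section GirthBasics

variable {E : V → V → Prop} {g : ℕ} {u v : V}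

lemma girth_le_closed (hg : girth E = g) (hpos : 0 < n) (h : HasWalk E u u n) :
    g ≤ n := hg ▸ Nat.sInf_le ⟨hpos, u, h⟩

lemma exists_girth_walk (hg : girth E = g) (hg3 : 3 ≤ g) :
    ∃ u : V, HasWalk E u u g := by
  have hne : {n : ℕ | 0 < n ∧ ∃ u : V, HasWalk E u u n}.Nonempty := by
    by_contra hemp
    rw [Set.not_nonempty_iff_eq_empty] at hemp
    rw [girth, hemp, Nat.sInf_empty] at hg
    omega
  have := Nat.sInf_mem hne
  rw [← girth, hg] at this
  exact this.2

lemma no_two_cycle (hg : girth E = g) (hg3 : 3 ≤ g) (h1 : E u v) (h2 : E v u) : False := by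
  have : HasWalk E u u 2 := (hasWalk_one.mpr h1).concat (hasWalk_one.mpr h2)
  have := girth_le_closed hg (by omega) this
  omega

/-- From the girth cycle: for each `1 ≤ j ≤ g - 1` there is a pair at distance `j`
with reverse distance `g - j`. -/
lemma girth_split (hirr : Irreflexive E) (hsc : StronglyConnected E)
    (hg : girth E = g) (hg3 : 3 ≤ g) {j : ℕ} (hj1 : 1 ≤ j) (hj2 : j ≤ g - 1) :
    ∃ x y : V, ddist E x y = j ∧ ddist E y x = g - j := by
  obtain ⟨u, hu⟩ := exists_girth_walk hg hg3
  rw [show g = j + (g - j) by omega] at hu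
  obtain ⟨x, h1, h2⟩ := hu.split
  have hne : u ≠ x := by
    rintro rfl
    have := girth_le_closed hg (by omega) h1
    omega
  have l1 : ddist E u x ≤ j := ddist_le h1
  have l2 : ddist E x u ≤ g - j := ddist_le h2
  have l3 : g ≤ ddist E u x + ddist E x u := by
    apply girth_le_closed hg
    · have : ddist E u x ≠ 0 := fun hh => hne ((ddist_eq_zero_iff hsc).mp hh)
      omega
    · exact (hasWalk_ddist hsc u x).concat (hasWalk_ddist hsc x u)
  exact ⟨u, x, by omega, by omega⟩

end GirthBasics

open scoped Classical

section NWalk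

variable [Fintype V]

noncomputable def nwalk (E : V → V → Prop) : ℕ → V → V → ℕ
  | 0, u, v => if u = v then 1 else 0
  | j+1, u, v => ∑ w : V, if E u w then nwalk E j w v else 0

variable {E : V → V → Prop} {k : ℕ} {u v : V} {j n : ℕ}

lemma nwalk_zero : nwalk E 0 u v = if u = v then 1 else 0 := rfl

lemma nwalk_succ : nwalk E (j + 1) u v = ∑ w : V, if E u w then nwalk E j w v else 0 := rfl

lemma nwalk_ne_zero_iff : ∀ (j : ℕ) (u v : V), (nwalk E j u v ≠ 0 ↔ HasWalk E u v j) := by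
  intro j
  induction j with
  | zero =>
    intro u v
    rw [nwalk_zero, hasWalk_zero]
    by_cases h : u = v <;> simp [h]
  | succ j ih =>
    intro u v
    rw [nwalk_succ, hasWalk_succ_iff]
    constructor
    · intro h
      obtain ⟨w, -, hw⟩ := Finset.exists_ne_zero_of_sum_ne_zero h
      by_cases hE : E u w
      · rw [if_pos hE] at hw
        exact ⟨w, hE, (ih w v).mp hw⟩
      · rw [if_neg hE] at hw; exact absurd rfl hw
    · rintro ⟨w, hE, hw⟩
      intro hsum
      rw [Finset.sum_eq_zero_iff] at hsum
      have := hsum w (Finset.mem_univ w)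
      rw [if_pos hE] at this
      exact (ih w v).mpr hw this

lemma ncard_setOf_eq_card_filter (p : V → Prop) :
    {w : V | p w}.ncard = (Finset.univ.filter p).card := by
  rw [Set.ncard_eq_toFinset_card']
  congr 1
  ext w
  simp

lemma hasWalk_ddist_le (hw : HasWalk E u v n) : ddist E u v ≤ n := ddist_le hw

/-- Transfer of the level counts, including the degenerate case `u = v`. -/
lemma card_level (h : IsDRDigraph E k) (i : ℕ) {u v u' v' : V}
    (hd : ddist E u v = ddist E u' v') :
    (Finset.univ.filter fun w => ddist E u w = i ∧ E v w).card
      = (Finset.univ.filter fun w => ddist E u' w = i ∧ E v' w).card := by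
  obtain ⟨hirr, hreg, hsc, hax⟩ := h
  rcases Nat.eq_zero_or_pos (ddist E u v) with h0 | h1
  · have h0' : ddist E u' v' = 0 := by omega
    have huv : u = v := (ddist_eq_zero_iff hsc).mp h0
    have huv' : u' = v' := (ddist_eq_zero_iff hsc).mp h0'
    subst huv; subst huv'
    have key : ∀ x : V, (Finset.univ.filter fun w => ddist E x w = i ∧ E x w).card
        = if i = 1 then k else 0 := by
      intro x
      by_cases hi : i = 1
      · subst hi
        have : (Finset.univ.filter fun w => ddist E x w = 1 ∧ E x w)
            = Finset.univ.filter fun w => E x w := by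
          ext w
          simp only [Finset.mem_filter, Finset.mem_univ, true_and]
          exact ⟨fun hh => hh.2, fun hh => ⟨(ddist_eq_one_iff hirr hsc).mpr hh, hh⟩⟩
        rw [if_pos rfl, this, ← ncard_setOf_eq_card_filter]
        exact (hreg x).1
      · rw [if_neg hi]
        rw [Finset.card_eq_zero, Finset.filter_eq_empty_iff]
        intro w _
        rintro ⟨hdw, hEw⟩
        exact hi (by rw [← hdw, (ddist_eq_one_iff hirr hsc).mpr hEw])
    rw [key u, key u']
  · have := hax i (ddist E u v) u v u' v' h1 rfl hd.symm
    rw [ncard_setOf_eq_card_filter, ncard_setOf_eq_card_filter] at this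
    convert this

lemma sum_group (G : ℕ → ℕ) (u v : V) :
    (∑ w : V, if E v w then G (ddist E u w) else 0)
      = ∑ i ∈ Finset.range (diam E + 1),
          (Finset.univ.filter fun w => ddist E u w = i ∧ E v w).card * G i := by
  have step1 : ∀ w : V, (if E v w then G (ddist E u w) else 0)
      = ∑ i ∈ Finset.range (diam E + 1), if ddist E u w = i ∧ E v w then G i else 0 := by
    intro w
    by_cases hE : E v w
    · rw [if_pos hE]
      have hmem : ddist E u w ∈ Finset.range (diam E + 1) := by
        rw [Finset.mem_range]
        exact Nat.lt_succ_of_le (ddist_le_diam E u w)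
      rw [show (∑ i ∈ Finset.range (diam E + 1), if ddist E u w = i ∧ E v w then G i else 0)
          = ∑ i ∈ Finset.range (diam E + 1), if ddist E u w = i then G i else 0 by
        apply Finset.sum_congr rfl; intro i _; by_cases hh : ddist E u w = i <;> simp [hh, hE]]
      rw [Finset.sum_ite_eq (Finset.range (diam E + 1)) (ddist E u w) G, if_pos hmem]
    · rw [if_neg hE]
      symm
      apply Finset.sum_eq_zero
      intro i _
      rw [if_neg (fun hh => hE hh.2)]
  calc (∑ w : V, if E v w then G (ddist E u w) else 0)
      = ∑ w : V, ∑ i ∈ Finset.range (diam E + 1),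
          if ddist E u w = i ∧ E v w then G i else 0 := Finset.sum_congr rfl fun w _ => step1 w
    _ = ∑ i ∈ Finset.range (diam E + 1), ∑ w : V,
          if ddist E u w = i ∧ E v w then G i else 0 := Finset.sum_comm
    _ = ∑ i ∈ Finset.range (diam E + 1),
          (Finset.univ.filter fun w => ddist E u w = i ∧ E v w).card * G i := by
        apply Finset.sum_congr rfl
        intro i _
        rw [Finset.sum_ite, Finset.sum_const, Finset.sum_const]
        simp [mul_comm]

noncomputable def revCount (E : V → V → Prop) [Fintype V] (j i : ℕ) : ℕ :=
  if hh : ∃ p : V × V, ddist E p.1 p.2 = i then nwalk E j hh.choose.2 hh.choose.1 else 0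

lemma nwalk_transfer (h : IsDRDigraph E k) :
    ∀ (j : ℕ) (u v u' v' : V), ddist E u v = ddist E u' v' →
      nwalk E j v u = nwalk E j v' u' := by
  intro j
  induction j with
  | zero =>
    intro u v u' v' hd
    have hsc := h.2.2.1
    rw [nwalk_zero, nwalk_zero]
    have hiff : (v = u) ↔ (v' = u') := by
      constructor
      · intro hh
        have : ddist E u v = 0 := by rw [hh]; exact ddist_self u
        exact ((ddist_eq_zero_iff hsc).mp (hd ▸ this)).symm
      · intro hh
        have : ddist E u' v' = 0 := by rw [hh]; exact ddist_self u'
        exact ((ddist_eq_zero_iff hsc).mp (hd.symm ▸ this)).symm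
    by_cases hvu : v = u
    · rw [if_pos hvu, if_pos (hiff.mp hvu)]
    · rw [if_neg hvu, if_neg (fun hh => hvu (hiff.mpr hh))]
  | succ j ih =>
    intro u v u' v' hd
    have hG : ∀ a b : V, nwalk E j b a = revCount E j (ddist E a b) := by
      intro a b
      have hex : ∃ p : V × V, ddist E p.1 p.2 = ddist E a b := ⟨(a, b), rfl⟩
      have h2 : revCount E j (ddist E a b) = nwalk E j hex.choose.2 hex.choose.1 := by
        unfold revCount
        rw [dif_pos hex]
      rw [h2]
      exact ih a b hex.choose.1 hex.choose.2 hex.choose_spec.symm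
    rw [nwalk_succ, nwalk_succ]
    calc (∑ w : V, if E v w then nwalk E j w u else 0)
        = ∑ w : V, if E v w then revCount E j (ddist E u w) else 0 := by
          apply Finset.sum_congr rfl; intro w _; rw [hG u w]
      _ = ∑ i ∈ Finset.range (diam E + 1),
            (Finset.univ.filter fun w => ddist E u w = i ∧ E v w).card * revCount E j i :=
          sum_group _ u v
      _ = ∑ i ∈ Finset.range (diam E + 1),
            (Finset.univ.filter fun w => ddist E u' w = i ∧ E v' w).card * revCount E j i := by
          apply Finset.sum_congr rfl; intro i _; rw [card_level h i hd]
      _ = ∑ w : V, if E v' w then revCount E j (ddist E u' w) else 0 := (sum_group _ u' v').symm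
      _ = ∑ w : V, if E v' w then nwalk E j w u' else 0 := by
          apply Finset.sum_congr rfl; intro w _; rw [hG u' w]

/-- The reverse distance only depends on the distance. -/
lemma ddist_rev_transfer (h : IsDRDigraph E k) {u v u' v' : V}
    (hd : ddist E u v = ddist E u' v') : ddist E v u = ddist E v' u' := by
  have hs : {n : ℕ | HasWalk E v u n} = {n : ℕ | HasWalk E v' u' n} := by
    ext j
    simp only [Set.mem_setOf_eq]
    rw [← nwalk_ne_zero_iff, ← nwalk_ne_zero_iff, nwalk_transfer h j u v u' v' hd]
  rw [ddist, ddist, hs]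

/-- Forward walk count as a function of distance. -/
noncomputable def fwdCount (E : V → V → Prop) (j m : ℕ) : ℕ :=
  if hh : ∃ p : V × V, ddist E p.1 p.2 = m then nwalk E j hh.choose.1 hh.choose.2 else 0

/-- Reverse distance as a function of distance. -/
noncomputable def rhoF [DecidableEq V] (E : V → V → Prop) (m : ℕ) : ℕ :=
  if hh : ∃ p : V × V, ddist E p.1 p.2 = m then ddist E hh.choose.2 hh.choose.1 else 0

lemma nwalk_eq_fwdCount (h : IsDRDigraph E k) (j : ℕ) {u v : V} {m : ℕ}
    (hd : ddist E u v = m) : nwalk E j u v = fwdCount E j m := by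
  unfold fwdCount
  have hex : ∃ p : V × V, ddist E p.1 p.2 = m := ⟨(u, v), hd⟩
  rw [dif_pos hex]
  have hdd : ddist E u v = ddist E hex.choose.1 hex.choose.2 := by
    rw [hd, hex.choose_spec]
  exact nwalk_transfer h j v u hex.choose.2 hex.choose.1 (ddist_rev_transfer h hdd)

lemma rhoF_spec [DecidableEq V] (h : IsDRDigraph E k) {u v : V} {m : ℕ}
    (hd : ddist E u v = m) : ddist E v u = rhoF E m := by
  unfold rhoF
  have hex : ∃ p : V × V, ddist E p.1 p.2 = m := ⟨(u, v), hd⟩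
  rw [dif_pos hex]
  have hdd : ddist E u v = ddist E hex.choose.1 hex.choose.2 := by
    rw [hd, hex.choose_spec]
  exact ddist_rev_transfer h hdd

lemma fwdCount_ne_zero (h : IsDRDigraph E k) [Nonempty V] {m : ℕ} (hm : m ≤ diam E) :
    fwdCount E m m ≠ 0 := by
  obtain ⟨u, v, huv⟩ := exists_pair_ddist_eq h.2.2.1 ‹Nonempty V› hm
  rw [← nwalk_eq_fwdCount h m huv]
  rw [nwalk_ne_zero_iff]
  have := hasWalk_ddist h.2.2.1 u v
  rwa [huv] at this

lemma fwdCount_eq_zero_of_lt {j m : ℕ} (hj : j < m) : fwdCount E j m = 0 := by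
  unfold fwdCount
  split
  · rename_i hh
    by_contra hne
    have hne2 := (nwalk_ne_zero_iff _ _ _).mp hne
    have := ddist_le hne2
    rw [hh.choose_spec] at this
    omega
  · rfl

end NWalk

section Normality

variable [Fintype V] {E : V → V → Prop} {k : ℕ}

noncomputable def Aq (E : V → V → Prop) [Fintype V] : Matrix V V ℚ :=
  Matrix.of fun u v => if E u v then 1 else 0

noncomputable def Bq (E : V → V → Prop) [Fintype V] : Matrix V V ℚ :=
  Matrix.of fun u v => if E v u then 1 else 0

noncomputable def Ai (E : V → V → Prop) [Fintype V] (m : ℕ) : Matrix V V ℚ :=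
  Matrix.of fun u v => if ddist E u v = m then 1 else 0

lemma Aq_pow_apply : ∀ (j : ℕ) (u v : V), (Aq E ^ j) u v = (nwalk E j u v : ℚ) := by
  intro j
  induction j with
  | zero =>
    intro u v
    rw [pow_zero, nwalk_zero]
    rw [Matrix.one_apply]
    by_cases hh : u = v <;> simp [hh]
  | succ j ih =>
    intro u v
    rw [pow_succ', Matrix.mul_apply, nwalk_succ]
    rw [Nat.cast_sum]
    apply Finset.sum_congr rfl
    intro w _
    rw [ih w v]
    by_cases hE : E u w
    · simp [Aq, hE]
    · simp [Aq, hE]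

lemma Ai_eq_zero {m : ℕ} (hm : diam E < m) : Ai E m = 0 := by
  ext u v
  have : ddist E u v ≠ m := by have := ddist_le_diam E u v; omega
  simp [Ai, this]

lemma Aq_pow_eq_sum (h : IsDRDigraph E k) (j : ℕ) :
    Aq E ^ j = ∑ m ∈ Finset.range (diam E + 1), (fwdCount E j m : ℚ) • Ai E m := by
  ext u v
  rw [Aq_pow_apply j u v]
  rw [Matrix.sum_apply]
  have hterm : ∀ m ∈ Finset.range (diam E + 1),
      ((fwdCount E j m : ℚ) • Ai E m) u v
        = if ddist E u v = m then (fwdCount E j m : ℚ) else 0 := by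
    intro m _
    rw [Matrix.smul_apply]
    by_cases hh : ddist E u v = m <;> simp [Ai, hh]
  rw [Finset.sum_congr rfl hterm]
  rw [Finset.sum_ite_eq (Finset.range (diam E + 1)) (ddist E u v)
    (fun m => (fwdCount E j m : ℚ))]
  rw [if_pos (by rw [Finset.mem_range]; exact Nat.lt_succ_of_le (ddist_le_diam E u v))]
  rw [nwalk_eq_fwdCount h j rfl]

lemma Ai_comm (h : IsDRDigraph E k) [Nonempty V] : ∀ m : ℕ, Ai E m * Aq E = Aq E * Ai E m := by
  intro m
  induction m using Nat.strong_induction_on with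
  | _ m ih =>
    by_cases hm : diam E < m
    · rw [Ai_eq_zero hm, Matrix.zero_mul, Matrix.mul_zero]
    push_neg at hm
    have hmem : m ∈ Finset.range (diam E + 1) := by
      rw [Finset.mem_range]; omega
    have hsplit : Aq E ^ m = (fwdCount E m m : ℚ) • Ai E m
        + ∑ i ∈ (Finset.range (diam E + 1)).erase m, (fwdCount E m i : ℚ) • Ai E i := by
      rw [Aq_pow_eq_sum h m]
      exact (Finset.add_sum_erase _ _ hmem).symm
    set S := ∑ i ∈ (Finset.range (diam E + 1)).erase m, (fwdCount E m i : ℚ) • Ai E i with hS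
    have hSc : S * Aq E = Aq E * S := by
      rw [hS, Finset.sum_mul, Finset.mul_sum]
      apply Finset.sum_congr rfl
      intro i hi
      rw [smul_mul_assoc, mul_smul_comm]
      rcases lt_or_ge i m with hlt | hge
      · rw [ih i hlt]
      · have : i ≠ m := (Finset.mem_erase.mp hi).1
        have : m < i := by omega
        rw [fwdCount_eq_zero_of_lt this]
        simp
    have hXc : (Aq E ^ m) * Aq E = Aq E * (Aq E ^ m) := by
      rw [← pow_succ, ← pow_succ']
    have hmain : (fwdCount E m m : ℚ) • (Ai E m * Aq E)
        = (fwdCount E m m : ℚ) • (Aq E * Ai E m) := by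
      have e1 : ((fwdCount E m m : ℚ) • Ai E m) * Aq E
          = Aq E * ((fwdCount E m m : ℚ) • Ai E m) := by
        have h1 : (fwdCount E m m : ℚ) • Ai E m = Aq E ^ m - S := by
          rw [hsplit]; exact (add_sub_cancel_right _ S).symm
        rw [h1, Matrix.sub_mul, Matrix.mul_sub, hXc, hSc]
      rw [← smul_mul_assoc, ← mul_smul_comm, e1]
    have hne : (fwdCount E m m : ℚ) ≠ 0 := by
      exact_mod_cast fwdCount_ne_zero h hm
    exact smul_right_injective _ hne hmain

lemma Bq_eq_sum [DecidableEq V] (h : IsDRDigraph E k) :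
    Bq E = ∑ m ∈ Finset.range (diam E + 1),
      (if rhoF E m = 1 then (1 : ℚ) else 0) • Ai E m := by
  ext u v
  rw [Matrix.sum_apply]
  have hterm : ∀ m ∈ Finset.range (diam E + 1),
      ((if rhoF E m = 1 then (1 : ℚ) else 0) • Ai E m) u v
        = if ddist E u v = m then (if rhoF E m = 1 then (1 : ℚ) else 0) else 0 := by
    intro m _
    rw [Matrix.smul_apply]
    by_cases hh : ddist E u v = m <;> simp [Ai, hh]
  rw [Finset.sum_congr rfl hterm]
  rw [Finset.sum_ite_eq (Finset.range (diam E + 1)) (ddist E u v)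
    (fun m => (if rhoF E m = 1 then (1 : ℚ) else 0))]
  rw [if_pos (by rw [Finset.mem_range]; exact Nat.lt_succ_of_le (ddist_le_diam E u v))]
  show (if E v u then (1:ℚ) else 0) = _
  have hiff : E v u ↔ rhoF E (ddist E u v) = 1 := by
    constructor
    · intro hE
      rw [← rhoF_spec h rfl]
      exact (ddist_eq_one_iff h.1 h.2.2.1).mpr hE
    · intro hr
      have := (rhoF_spec h (u := u) (v := v) rfl).symm
      rw [hr] at this
      exact (ddist_eq_one_iff h.1 h.2.2.1).mp this.symm
  exact if_congr hiff rfl rfl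

lemma normality (h : IsDRDigraph E k) [Nonempty V] [DecidableEq V] :
    Bq E * Aq E = Aq E * Bq E := by
  rw [Bq_eq_sum h, Finset.sum_mul, Finset.mul_sum]
  apply Finset.sum_congr rfl
  intro m _
  rw [smul_mul_assoc, mul_smul_comm, Ai_comm h m]

lemma sum_ite_prod_card (P Q : V → Prop) :
    (∑ w : V, (if P w then (1 : ℚ) else 0) * (if Q w then 1 else 0))
      = ((Finset.univ.filter fun w => P w ∧ Q w).card : ℚ) := by
  rw [← Finset.sum_boole]
  apply Finset.sum_congr rfl
  intro w _
  by_cases hP : P w <;> by_cases hQ : Q w <;> simp [hP, hQ]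

lemma commonIn_eq_commonOut (h : IsDRDigraph E k) [Nonempty V] (u v : V) :
    {w : V | E w u ∧ E w v}.ncard = {w : V | E u w ∧ E v w}.ncard := by
  classical
  have hN := normality h (E := E)
  have hentry : (Bq E * Aq E) u v = (Aq E * Bq E) u v := by rw [hN]
  have hL : (Bq E * Aq E) u v
      = ((Finset.univ.filter fun w => E w u ∧ E w v).card : ℚ) := by
    rw [Matrix.mul_apply]
    rw [← sum_ite_prod_card (fun w => E w u) (fun w => E w v)]
    apply Finset.sum_congr rfl
    intro w _
    simp [Bq, Aq]
  have hR : (Aq E * Bq E) u v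
      = ((Finset.univ.filter fun w => E u w ∧ E v w).card : ℚ) := by
    rw [Matrix.mul_apply]
    rw [← sum_ite_prod_card (fun w => E u w) (fun w => E v w)]
    apply Finset.sum_congr rfl
    intro w _
    simp [Bq, Aq]
  rw [hL, hR] at hentry
  have : (Finset.univ.filter fun w => E w u ∧ E w v).card
      = (Finset.univ.filter fun w => E u w ∧ E v w).card := by
    exact_mod_cast hentry
  rw [ncard_setOf_eq_card_filter, ncard_setOf_eq_card_filter]
  convert this

end Normality

section Main

variable [Fintype V] {E : V → V → Prop} {k g : ℕ}

lemma nonempty_of_diam_pos (hd : 0 < diam E) : Nonempty V := by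
  by_contra hemp
  rw [not_nonempty_iff] at hemp
  rw [diam, Finset.univ_eq_empty, Finset.sup_empty] at hd
  exact absurd hd (by simp)

lemma co_nonempty_of_ncard (hpos : 0 < {w : V | E u w ∧ E v w}.ncard) :
    {w : V | E u w ∧ E v w}.Nonempty := (Set.ncard_pos (Set.toFinite _)).mp hpos

/-- The number of common out-neighbours only depends on the distance (for distinct pairs). -/
lemma commonOut_transfer (h : IsDRDigraph E k) {u v u' v' : V}
    (h1 : 1 ≤ ddist E u v) (hd : ddist E u v = ddist E u' v') :
    {w : V | E u w ∧ E v w}.ncard = {w : V | E u' w ∧ E v' w}.ncard := by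
  obtain ⟨hirr, hreg, hsc, hax⟩ := h
  have hset : ∀ a b : V, {w : V | E a w ∧ E b w} = {w : V | ddist E a w = 1 ∧ E b w} := by
    intro a b
    ext w
    simp only [Set.mem_setOf_eq]
    rw [ddist_eq_one_iff hirr hsc]
  rw [hset u v, hset u' v']
  exact hax 1 (ddist E u v) u v u' v' h1 rfl hd.symm

/-- If some pair at distance `l ≥ 1` has a common out-neighbour, then all do. -/
lemma commonOut_all (h : IsDRDigraph E k) {l : ℕ} (hl : 1 ≤ l)
    (hex : ∃ u v : V, ddist E u v = l ∧ {w : V | E u w ∧ E v w}.Nonempty) :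
    ∀ u v : V, ddist E u v = l → {w : V | E u w ∧ E v w}.Nonempty := by
  obtain ⟨a, b, hab, hne⟩ := hex
  intro u v huv
  apply co_nonempty_of_ncard
  have := commonOut_transfer h (u := a) (v := b) (u' := u) (v' := v)
    (by omega) (by rw [hab, huv])
  rw [← this]
  exact (Set.ncard_pos (Set.toFinite _)).mpr hne

/-- A common in-neighbour yields a common out-neighbour (normality). -/
lemma co_of_ci (h : IsDRDigraph E k) [Nonempty V] {z a b : V}
    (hza : E z a) (hzb : E z b) : {w : V | E a w ∧ E b w}.Nonempty := by
  apply co_nonempty_of_ncard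
  rw [← commonIn_eq_commonOut h a b]
  exact (Set.ncard_pos (Set.toFinite _)).mpr ⟨z, hza, hzb⟩

/-- Main small-distance lemma: for `2 ≤ l` with `2l ≤ g + 1`, some (hence any) pair at
distance `l` has a common out-neighbour. -/
lemma alpha_pos_small (h : IsDRDigraph E k) (hg : girth E = g) (hg3 : 3 ≤ g)
    (hlam : ∀ u v : V, E u v → 1 ≤ {w : V | E u w ∧ E v w}.ncard)
    {l : ℕ} (hl2 : 2 ≤ l) (hlg : 2 * l ≤ g + 1) (hld : l ≤ diam E) :
    ∃ u v : V, ddist E u v = l ∧ {w : V | E u w ∧ E v w}.Nonempty := by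
  have hirr := h.1
  have hsc := h.2.2.1
  have hneV : Nonempty V := nonempty_of_diam_pos (lt_of_lt_of_le (by omega : 0 < l) hld)
  obtain ⟨u0, v0, hd0⟩ := exists_pair_ddist_eq hsc hneV hld
  by_contra hcon
  push_neg at hcon
  have hCI : ∀ z a b : V, E z a → E z b → ddist E a b = l → False := by
    intro z a b hza hzb hab
    have hco := co_of_ci h hza hzb
    rw [hcon a b hab] at hco
    exact Set.not_nonempty_empty hco
  have hstep : ∀ x : V, E u0 x → ∃ y, E u0 y ∧ E x y := by
    intro x hx
    have h1 := hlam u0 x hx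
    have h2 : {w : V | E u0 w ∧ E x w}.Nonempty := co_nonempty_of_ncard (by omega)
    obtain ⟨y, hy1, hy2⟩ := h2
    exact ⟨y, hy1, hy2⟩
  -- first out-neighbour of u0
  have hwalk0 := hasWalk_ddist hsc u0 v0
  rw [hd0] at hwalk0
  rw [show l = (l - 1) + 1 by omega] at hwalk0
  obtain ⟨b0, hb0, -⟩ := hasWalk_succ_iff.mp hwalk0
  choose fy hf1 hf2 using hstep
  let F : {x : V // E u0 x} → {x : V // E u0 x} := fun t => ⟨fy t.1 t.2, hf1 t.1 t.2⟩
  let b : ℕ → {x : V // E u0 x} := fun n => F^[n] ⟨b0, hb0⟩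
  have hbsucc : ∀ n, b (n + 1) = F (b n) := fun n => Function.iterate_succ_apply' F n _
  have hedge : ∀ n, E (b n).1 (b (n + 1)).1 := by
    intro n
    rw [hbsucc n]
    exact hf2 (b n).1 (b n).2
  have hEz : ∀ n, E u0 (b n).1 := fun n => (b n).2
  have hpair : ∀ j i : ℕ, i < j → ddist E (b i).1 (b j).1 ≤ l - 1 := by
    intro j
    induction j with
    | zero => intro i hi; omega
    | succ j ihj =>
      intro i hi
      rcases Nat.lt_or_ge i j with hij' | hij'
      · have hd1 := ihj i hij'
        have hd2 : ddist E (b i).1 (b (j + 1)).1 ≤ l := by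
          have := ddist_triangle hsc (b i).1 (b j).1 (b (j + 1)).1
          have hone : ddist E (b j).1 (b (j + 1)).1 ≤ 1 :=
            ddist_le (hasWalk_one.mpr (hedge j))
          omega
        have hne : ddist E (b i).1 (b (j + 1)).1 ≠ l := by
          intro hh
          exact hCI u0 _ _ (hEz i) (hEz (j + 1)) hh
        omega
      · have : i = j := by omega
        subst this
        have hone : ddist E (b i).1 (b (i + 1)).1 ≤ 1 :=
          ddist_le (hasWalk_one.mpr (hedge i))
        omega
  obtain ⟨i, j, hij, heq⟩ := Finite.exists_ne_map_eq_of_infinite b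
  -- wlog i < j
  have main : ∀ i j : ℕ, i < j → b i = b j → False := by
    intro i j hij heq
    have hnea : (b (i + 1)).1 ≠ (b i).1 := fun hh => hirr _ (hh ▸ hedge i)
    rcases Nat.lt_or_ge (i + 1) j with hj2 | hj2
    · have d1 : ddist E (b i).1 (b (i + 1)).1 ≤ l - 1 := hpair (i + 1) i (by omega)
      have d2 : ddist E (b (i + 1)).1 (b j).1 ≤ l - 1 := hpair j (i + 1) hj2
      rw [← heq] at d2
      have hpos : 1 ≤ ddist E (b (i + 1)).1 (b i).1 := by
        have := (ddist_eq_zero_iff (u := (b (i+1)).1) (v := (b i).1) hsc)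
        rcases Nat.eq_zero_or_pos (ddist E (b (i + 1)).1 (b i).1) with h0 | h1
        · exact absurd (this.mp h0) hnea
        · omega
      have hclosed : HasWalk E (b (i + 1)).1 (b (i + 1)).1
          (ddist E (b (i + 1)).1 (b i).1 + ddist E (b i).1 (b (i + 1)).1) :=
        (hasWalk_ddist hsc _ _).concat (hasWalk_ddist hsc _ _)
      have := girth_le_closed hg (by omega) hclosed
      omega
    · have : j = i + 1 := by omega
      subst this
      exact hnea (congrArg Subtype.val heq.symm)
  rcases Nat.lt_or_ge i j with hlt | hge
  · exact main i j hlt heq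
  · have : j < i := by omega
    exact main j i this heq.symm

lemma rev_of_dist (h : IsDRDigraph E k) (hg : girth E = g) (hg3 : 3 ≤ g)
    {j : ℕ} (hj1 : 1 ≤ j) (hj2 : j ≤ g - 1) {u v : V} (huv : ddist E u v = j) :
    ddist E v u = g - j := by
  obtain ⟨x, y, hxy, hyx⟩ := girth_split h.1 h.2.2.1 hg hg3 hj1 hj2
  have := ddist_rev_transfer h (show ddist E u v = ddist E x y by rw [huv, hxy])
  rw [this, hyx]

lemma edge_rev (h : IsDRDigraph E k) (hg : girth E = g) (hg3 : 3 ≤ g)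
    {u v : V} (hE : E u v) : ddist E v u = g - 1 :=
  rev_of_dist h hg hg3 (le_refl 1) (by omega)
    ((ddist_eq_one_iff h.1 h.2.2.1).mpr hE)

lemma rev_of_dist_two (h : IsDRDigraph E k) (hg : girth E = g) (hg3 : 3 ≤ g)
    {u v : V} (huv : ddist E u v = 2) : ddist E v u = g - 2 :=
  rev_of_dist h hg hg3 (by omega) (by omega) huv

lemma edge_of_dist_g_sub_one (h : IsDRDigraph E k) (hg : girth E = g) (hg3 : 3 ≤ g)
    {u v : V} (huv : ddist E u v = g - 1) : E v u := by
  have := rev_of_dist h hg hg3 (j := g - 1) (by omega) (le_refl _) huv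
  rw [show g - (g - 1) = 1 by omega] at this
  exact (ddist_eq_one_iff h.1 h.2.2.1).mp this

/-- Pairs at distance `g` have a common out-neighbour. -/
lemma alpha_pos_g (h : IsDRDigraph E k) (hg : girth E = g) (hg3 : 3 ≤ g)
    (hgd : g ≤ diam E) :
    ∃ u v : V, ddist E u v = g ∧ {w : V | E u w ∧ E v w}.Nonempty := by
  have hsc := h.2.2.1
  have hneV : Nonempty V := nonempty_of_diam_pos (E := E) (lt_of_lt_of_le (by omega : 0 < g) hgd)
  obtain ⟨u, v, huv⟩ := exists_pair_ddist_eq hsc hneV hgd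
  obtain ⟨x, hx1, hx2⟩ := ddist_split hsc (show g - 1 ≤ ddist E u v by omega)
  rw [huv, show g - (g - 1) = 1 by omega] at hx2
  have hxv : E x v := (ddist_eq_one_iff h.1 hsc).mp hx2
  have hxu : E x u := edge_of_dist_g_sub_one h hg hg3 hx1
  exact ⟨u, v, huv, co_of_ci h hxu hxv⟩

/-- The diameter is at most the girth. -/
lemma diam_le_girth (h : IsDRDigraph E k) (hg : girth E = g) (hg3 : 3 ≤ g)
    (hlam : ∀ u v : V, E u v → 1 ≤ {w : V | E u w ∧ E v w}.ncard) :
    diam E ≤ g := by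
  by_contra hc
  push_neg at hc
  have hsc := h.2.2.1
  have hneV : Nonempty V := nonempty_of_diam_pos (E := E)
    (lt_of_lt_of_le (by omega : 0 < g) (by omega : g ≤ diam E))
  obtain ⟨z, t, hzt⟩ := exists_pair_ddist_eq hsc hneV (show g + 1 ≤ diam E by omega)
  obtain ⟨y, hy1, hy2⟩ := ddist_split hsc (show g ≤ ddist E z t by omega)
  rw [hzt, show g + 1 - g = 1 by omega] at hy2
  have hyt : E y t := (ddist_eq_one_iff h.1 hsc).mp hy2
  -- common out-neighbour of the pair (z, y) at distance g, hence a common in-neighbour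
  have hg_all := commonOut_all h (l := g) (by omega)
    (alpha_pos_g h hg hg3 (by omega))
  have hCOzy := hg_all z y hy1
  have hCIzy : {w : V | E w z ∧ E w y}.Nonempty := by
    apply (Set.ncard_pos (Set.toFinite _)).mp
    rw [commonIn_eq_commonOut h z y]
    exact (Set.ncard_pos (Set.toFinite _)).mpr hCOzy
  obtain ⟨z', hz'z, hz'y⟩ := hCIzy
  have hzz' : ddist E z z' = g - 1 := edge_rev h hg hg3 hz'z
  have hz't : ddist E z' t ≤ 2 := by
    have h1 := ddist_triangle hsc z' y t
    have h2 : ddist E z' y ≤ 1 := ddist_le (hasWalk_one.mpr hz'y)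
    have h3 : ddist E y t ≤ 1 := ddist_le (hasWalk_one.mpr hyt)
    omega
  have hz'net : z' ≠ t := by
    rintro rfl
    exact no_two_cycle hg hg3 hz'y hyt
  have hz'pos : 1 ≤ ddist E z' t := by
    rcases Nat.eq_zero_or_pos (ddist E z' t) with h0 | h1
    · exact absurd ((ddist_eq_zero_iff hsc).mp h0) hz'net
    · omega
  rcases (show ddist E z' t = 1 ∨ ddist E z' t = 2 by omega) with h1 | h2
  · -- z → z' → t too short
    have hz't1 : ddist E z t ≤ ddist E z z' + ddist E z' t := ddist_triangle hsc z z' t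
    omega
  · -- common in-neighbour of (z', t) at distance 2
    have h2all := commonOut_all h (l := 2) (by omega)
      (alpha_pos_small h hg hg3 hlam (le_refl 2) (by omega) (by omega))
    have hCO2 := h2all z' t h2
    have hCI2 : {w : V | E w z' ∧ E w t}.Nonempty := by
      apply (Set.ncard_pos (Set.toFinite _)).mp
      rw [commonIn_eq_commonOut h z' t]
      exact (Set.ncard_pos (Set.toFinite _)).mpr hCO2
    obtain ⟨w, hwz', hwt⟩ := hCI2
    have hwz : ddist E w z ≤ 2 := by
      have h1 := ddist_triangle hsc w z' z
      have ha : ddist E w z' ≤ 1 := ddist_le (hasWalk_one.mpr hwz')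
      have hb : ddist E z' z ≤ 1 := ddist_le (hasWalk_one.mpr hz'z)
      omega
    have hwnez : w ≠ z := by
      rintro rfl
      exact no_two_cycle hg hg3 hwz' hz'z
    have hwzpos : 1 ≤ ddist E w z := by
      rcases Nat.eq_zero_or_pos (ddist E w z) with h0 | h1
      · exact absurd ((ddist_eq_zero_iff hsc).mp h0) hwnez
      · omega
    have hwt1 : ddist E w t ≤ 1 := ddist_le (hasWalk_one.mpr hwt)
    have htr : ddist E z t ≤ ddist E z w + ddist E w t := ddist_triangle hsc z w t
    rcases (show ddist E w z = 1 ∨ ddist E w z = 2 by omega) with hw1 | hw2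
    · have : ddist E z w = g - 1 :=
        edge_rev h hg hg3 ((ddist_eq_one_iff h.1 hsc).mp hw1)
      omega
    · have : ddist E z w = g - 2 := rev_of_dist_two h hg hg3 hw2
      omega

theorem stmt4' (E : V → V → Prop)
    (h : IsDRDigraph E k) (hg3 : 3 ≤ g) (hg : girth E = g)
    (hlam : ∀ u v : V, E u v → 1 ≤ {w : V | E u w ∧ E v w}.ncard) :
    ∀ l : ℕ, 2 ≤ l → l ≤ diam E →
      ∃ u v : V, ddist E u v = l ∧ ∃ w : V, E u w ∧ E v w := by
  intro l hl2 hld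
  have hsc := h.2.2.1
  have hdg : diam E ≤ g := diam_le_girth h hg hg3 hlam
  have hlg : l ≤ g := le_trans hld hdg
  rcases (show 2 * l ≤ g + 1 ∨ (g + 2 ≤ 2 * l) by omega) with hsmall | hbig
  · obtain ⟨u, v, huv, w, hw⟩ := alpha_pos_small h hg hg3 hlam hl2 hsmall hld
    exact ⟨u, v, huv, w, hw.1, hw.2⟩
  rcases (show l = g ∨ l = g - 1 ∨ l ≤ g - 2 by omega) with hl | hl | hl
  · subst hl
    obtain ⟨u, v, huv, w, hw⟩ := alpha_pos_g h hg hg3 hld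
    exact ⟨u, v, huv, w, hw.1, hw.2⟩
  · -- distance g - 1: reverse of an edge
    obtain ⟨x, y, hxy, hyx⟩ := girth_split h.1 hsc hg hg3 (le_refl 1) (by omega)
    have hExy : E x y := (ddist_eq_one_iff h.1 hsc).mp hxy
    have hco := hlam x y hExy
    have hpos : 0 < {w : V | E x w ∧ E y w}.ncard := by omega
    obtain ⟨w, hw1, hw2⟩ := co_nonempty_of_ncard hpos
    exact ⟨y, x, by rw [hyx]; omega, w, hw2, hw1⟩
  · -- use the reverse pair at distance g - l
    have hl'2 : 2 ≤ g - l := by omega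
    have hl'g : 2 * (g - l) ≤ g + 1 := by omega
    have hl'd : g - l ≤ diam E := by
      obtain ⟨x, y, hxy, -⟩ := girth_split h.1 hsc hg hg3 (by omega : 1 ≤ g - l) (by omega)
      calc g - l = ddist E x y := hxy.symm
        _ ≤ diam E := ddist_le_diam E x y
    obtain ⟨u, v, huv, w, hw1, hw2⟩ := alpha_pos_small h hg hg3 hlam hl'2 hl'g hl'd
    have hvu : ddist E v u = l := by
      have := rev_of_dist h hg hg3 (j := g - l) (by omega) (by omega) huv
      rw [this]
      omega
    exact ⟨v, u, hvu, w, hw2, hw1⟩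

end Main

theorem stmt4 [Fintype V] (E : V → V → Prop) (k g : ℕ)
    (h : IsDRDigraph E k) (hg3 : 3 ≤ g) (hg : girth E = g)
    (hlam : ∀ u v : V, E u v → 1 ≤ {w : V | E u w ∧ E v w}.ncard) :
    ∀ l : ℕ, 2 ≤ l → l ≤ diam E →
      ∃ u v : V, ddist E u v = l ∧ ∃ w : V, E u w ∧ E v w := by
  intro l hl2 hld
  exact stmt4' E h hg3 hg hlam l hl2 hld

end PaperDRD
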